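/- arXiv:1412.2128 — 4 statements merged into one kernel-verified Lean document; each statement's English description precedes it below -/
import Mathlib

section
/- Let f : ℝⁿ → ℝ be convex, x̄ ∈ ℝⁿ, R > 0, and ε > 0. Let f₁* = min over the closed ball B(x̄,R) of f, and f₂* = min over B(x̄,2R) of f. Suppose x̄₁ ∈ B(x̄,R) and x̄₂ ∈ B(x̄,2R) satisfy f(x̄₁) - f₁* ≤ ε and f(x̄₂) - f₂* ≤ ε, and suppose 0 ≤ f(x̄₁) - f(x̄₂) ≤ ε. Let x* be a global minimizer of f with D* = ‖x̄ - x*‖. Then f(x̄₂) - f(x*) ≤ (3 + 2D*/R)·ε. -/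
open scoped RealInnerProductSpace

theorem stmt0 {n : ℕ} (f : EuclideanSpace ℝ (Fin n) → ℝ)
    (hf : ConvexOn ℝ Set.univ f)
    (xbar xstar x1 x2 : EuclideanSpace ℝ (Fin n)) (R ε : ℝ)
    (hR : 0 < R) (hε : 0 < ε)
    (hstar : ∀ x, f xstar ≤ f x)
    (hx1 : x1 ∈ Metric.closedBall xbar R)
    (hx2 : x2 ∈ Metric.closedBall xbar (2 * R))
    (h1 : ∀ x ∈ Metric.closedBall xbar R, f x1 ≤ f x + ε)
    (h2 : ∀ x ∈ Metric.closedBall xbar (2 * R), f x2 ≤ f x + ε)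
    (h3 : 0 ≤ f x1 - f x2) (h4 : f x1 - f x2 ≤ ε) :
    f x2 - f xstar ≤ (3 + 2 * ‖xbar - xstar‖ / R) * ε := by
  set D : ℝ := ‖xbar - xstar‖ with hDdef
  have hD0 : 0 ≤ D := norm_nonneg _
  have hmain : (f x2 - f xstar) * R ≤ (3 * R + 2 * D) * ε := by
    by_cases hD : D ≤ 2 * R
    · have hmem : xstar ∈ Metric.closedBall xbar (2 * R) := by
        rw [Metric.mem_closedBall, dist_comm, dist_eq_norm]
        exact hD
      have := h2 xstar hmem
      nlinarith [hstar x2]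
    · push_neg at hD
      set t : ℝ := R / (D - R) with htdef
      have hDR : 0 < D - R := by linarith
      have ht0 : 0 < t := div_pos hR hDR
      have ht1 : t ≤ 1 := by
        rw [div_le_one hDR]; linarith
      have hteq : t * (D - R) = R := div_mul_cancel₀ R (ne_of_gt hDR)
      set y : EuclideanSpace ℝ (Fin n) := (1 - t) • x1 + t • xstar with hydef
      have hconv : f y ≤ (1 - t) * f x1 + t * f xstar :=
        hf.2 (Set.mem_univ x1) (Set.mem_univ xstar) (by linarith) (le_of_lt ht0)
          (by ring)
      have hx1n : ‖x1 - xbar‖ ≤ R := by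
        rw [← dist_eq_norm]; exact Metric.mem_closedBall.mp hx1
      have hxsn : ‖xstar - xbar‖ = D := by
        rw [hDdef, norm_sub_rev]
      have hy : y ∈ Metric.closedBall xbar (2 * R) := by
        rw [Metric.mem_closedBall, dist_eq_norm]
        have heq : y - xbar = (1 - t) • (x1 - xbar) + t • (xstar - xbar) := by
          rw [hydef]; module
        calc ‖y - xbar‖ ≤ ‖(1 - t) • (x1 - xbar)‖ + ‖t • (xstar - xbar)‖ := by
              rw [heq]; exact norm_add_le _ _
          _ = (1 - t) * ‖x1 - xbar‖ + t * ‖xstar - xbar‖ := by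
              rw [norm_smul, norm_smul, Real.norm_eq_abs, Real.norm_eq_abs,
                abs_of_nonneg (by linarith), abs_of_nonneg (le_of_lt ht0)]
          _ ≤ (1 - t) * R + t * D := by
              rw [hxsn]
              have := mul_le_mul_of_nonneg_left hx1n (by linarith : (0:ℝ) ≤ 1 - t)
              linarith
          _ = R + t * (D - R) := by ring
          _ = 2 * R := by rw [hteq]; ring
      have hkey : f x2 ≤ (1 - t) * f x1 + t * f xstar + ε := le_trans (h2 y hy) (by linarith)
      -- multiply through by (D - R)
      have hkey' : (D - R) * f x2 ≤ (D - 2 * R) * f x1 + R * f xstar + (D - R) * ε := by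
        have := mul_le_mul_of_nonneg_left hkey (le_of_lt hDR)
        have hexp : (D - R) * ((1 - t) * f x1 + t * f xstar + ε)
            = ((D - R) - t * (D - R)) * f x1 + (t * (D - R)) * f xstar + (D - R) * ε := by
          ring
        rw [hexp, hteq] at this
        linarith
      have hf1 : f x1 ≤ f x2 + ε := by linarith
      have hmul : (D - 2 * R) * f x1 ≤ (D - 2 * R) * (f x2 + ε) :=
        mul_le_mul_of_nonneg_left hf1 (by linarith)
      nlinarith [hstar x2]
  have hrw : 3 + 2 * D / R = (3 * R + 2 * D) / R := by field_simp
  rw [hrw, div_mul_eq_mul_div, le_div_iff₀ hR]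
  linarith
end

section
/- Let Q = {x ∈ ℝⁿ : ⟨A_i, x⟩ ≤ b_i, i=1,...,m} be nonempty and p ∈ ℝⁿ. If λ* ≥ 0 is an optimal solution of the dual problem max_{λ≥0} -½λᵀMλ + Cᵀλ, where M_{ij} = ⟨A_i, A_j⟩ and C_i = ⟨A_i, p⟩ - b_i, then the Euclidean projection of p onto Q is x_c* = p - Σ_{i=1}^m λ*_i A_i. -/
open scoped RealInnerProductSpace

private lemma aux1 (d K : ℝ) (hK : 0 ≤ K)
    (h : ∀ t : ℝ, 0 ≤ t → t * d ≤ t ^ 2 / 2 * K) : d ≤ 0 := by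
  by_contra hpos
  push_neg at hpos
  rcases hK.eq_or_lt with h0 | h0
  · have h1 := h d hpos.le
    nlinarith
  · have h1 := h (d / K) (by positivity)
    rw [div_mul_eq_mul_div, div_pow, div_div, div_mul_eq_mul_div,
      div_le_div_iff₀ (by positivity) (by positivity)] at h1
    nlinarith [mul_pos (mul_pos hpos hpos) (mul_pos h0 h0)]

private lemma aux2 (lam d K : ℝ) (hK : 0 ≤ K) (hlam : 0 < lam) (hdneg : d < 0)
    (h : ∀ t : ℝ, 0 ≤ lam + t → t * d ≤ t ^ 2 / 2 * K) : False := by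
  have hK1 : (0 : ℝ) < K + 1 := by linarith
  set t : ℝ := max (-lam) (d / (K + 1)) with htdef
  have ht0 : t < 0 := max_lt (by linarith) (div_neg_of_neg_of_pos hdneg hK1)
  have htlam : 0 ≤ lam + t := by
    have := le_max_left (-lam) (d / (K + 1)); linarith
  have htge : d ≤ t * (K + 1) := by
    have h2 := le_max_right (-lam) (d / (K + 1))
    calc d = d / (K + 1) * (K + 1) := by field_simp
      _ ≤ t * (K + 1) := mul_le_mul_of_nonneg_right h2 hK1.le
  have h1 := h t htlam
  nlinarith [mul_le_mul_of_nonpos_left htge ht0.le,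
    mul_pos_of_neg_of_neg ht0 hdneg, mul_pos_of_neg_of_neg ht0 ht0]

theorem stmt14 {n m : ℕ} (A : Fin m → EuclideanSpace ℝ (Fin n)) (b : Fin m → ℝ)
    (p : EuclideanSpace ℝ (Fin n))
    (hQne : ({x | ∀ i, ⟪A i, x⟫ ≤ b i} : Set (EuclideanSpace ℝ (Fin n))).Nonempty)
    (lam : Fin m → ℝ) (hlam : ∀ i, 0 ≤ lam i)
    (hopt : IsMaxOn (fun l : Fin m → ℝ =>
        -(1/2) * (∑ i, ∑ j, l i * ⟪A i, A j⟫ * l j) + ∑ i, (⟪A i, p⟫ - b i) * l i)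
      {l | ∀ i, 0 ≤ l i} lam) :
    (p - ∑ i, lam i • A i) ∈ ({x | ∀ i, ⟪A i, x⟫ ≤ b i} : Set (EuclideanSpace ℝ (Fin n))) ∧
    ∀ y ∈ ({x | ∀ i, ⟪A i, x⟫ ≤ b i} : Set (EuclideanSpace ℝ (Fin n))),
      ‖(p - ∑ i, lam i • A i) - p‖ ≤ ‖y - p‖ := by
  set S : EuclideanSpace ℝ (Fin n) := ∑ i, lam i • A i with hS
  have hquad : ∀ l : Fin m → ℝ,
      (∑ i, ∑ j, l i * ⟪A i, A j⟫ * l j) = ⟪∑ i, l i • A i, ∑ j, l j • A j⟫ := by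
    intro l
    rw [sum_inner]
    refine Finset.sum_congr rfl fun i _ => ?_
    rw [inner_sum]
    refine Finset.sum_congr rfl fun j _ => ?_
    rw [real_inner_smul_left, real_inner_smul_right]; ring
  -- key variational inequality
  have key : ∀ i (t : ℝ), 0 ≤ lam i + t →
      t * (⟪A i, p - S⟫ - b i) ≤ t ^ 2 / 2 * ‖A i‖ ^ 2 := by
    intro i t ht
    set l' : Fin m → ℝ := fun j => lam j + if j = i then t else 0 with hl'
    have hmem : l' ∈ {l : Fin m → ℝ | ∀ i, 0 ≤ l i} := by
      intro j
      by_cases hj : j = i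
      · subst hj; simpa [hl'] using ht
      · simpa [hl', hj] using hlam j
    have h := hopt hmem
    simp only [Set.mem_setOf_eq] at h
    rw [hquad l', hquad lam] at h
    have hs1 : (∑ j, l' j • A j) = S + t • A i := by
      simp only [hl', add_smul, ite_smul, zero_smul, Finset.sum_add_distrib,
        Finset.sum_ite_eq', Finset.mem_univ, if_true, hS]
    have hs2 : (∑ j, (⟪A j, p⟫ - b j) * l' j)
        = (∑ j, (⟪A j, p⟫ - b j) * lam j) + t * (⟪A i, p⟫ - b i) := by
      simp only [hl', mul_add, mul_ite, mul_zero, Finset.sum_add_distrib,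
        Finset.sum_ite_eq', Finset.mem_univ, if_true]
      ring
    have hSS : (⟪∑ i, lam i • A i, ∑ j, lam j • A j⟫ : ℝ) = ⟪S, S⟫ := rfl
    rw [hs1, hs2, hSS] at h
    have hexp : ⟪S + t • A i, S + t • A i⟫
        = ⟪S, S⟫ + 2 * t * ⟪A i, S⟫ + t ^ 2 * ‖A i‖ ^ 2 := by
      rw [real_inner_add_add_self]
      simp only [real_inner_smul_left, real_inner_smul_right,
        real_inner_self_eq_norm_sq, real_inner_comm S (A i), norm_smul,
        Real.norm_eq_abs, mul_pow, sq_abs]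
      ring
    rw [hexp] at h
    have hsub : (⟪A i, p - S⟫ : ℝ) = ⟪A i, p⟫ - ⟪A i, S⟫ := by rw [inner_sub_right]
    rw [hsub]
    nlinarith [h]
  -- gradient nonpositive: d i ≤ 0
  have hd : ∀ i, ⟪A i, p - S⟫ - b i ≤ 0 := by
    intro i
    refine aux1 _ (‖A i‖ ^ 2) (by positivity) fun t ht => ?_
    exact key i t (by linarith [hlam i])
  -- complementary slackness
  have hcs : ∀ i, lam i * (⟪A i, p - S⟫ - b i) = 0 := by
    intro i
    rcases (hlam i).eq_or_lt with h0 | h0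
    · rw [← h0, zero_mul]
    rcases (hd i).lt_or_eq with hdneg | hd0
    · exact absurd (aux2 (lam i) _ (‖A i‖ ^ 2) (by positivity) h0 hdneg
        (fun t ht => key i t ht)) (not_false)
    · rw [hd0, mul_zero]
  refine ⟨?_, ?_⟩
  · intro i
    have := hd i
    simpa using this
  · intro y hy
    simp only [Set.mem_setOf_eq] at hy
    have hexp : ‖y - p‖ ^ 2
        = ‖y - (p - S)‖ ^ 2 + 2 * ⟪y - (p - S), (p - S) - p⟫ + ‖(p - S) - p‖ ^ 2 := by
      have h := norm_add_sq_real (y - (p - S)) ((p - S) - p)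
      rw [sub_add_sub_cancel] at h
      exact h
    have hin : 0 ≤ ⟪y - (p - S), (p - S) - p⟫ := by
      have h1 : (p - S) - p = -S := by abel
      rw [h1, inner_neg_right, hS, inner_sum, neg_nonneg]
      refine Finset.sum_nonpos fun i _ => ?_
      rw [real_inner_smul_right, real_inner_comm, inner_sub_right]
      have h2 := hcs i
      have h3 := mul_le_mul_of_nonneg_left (hy i) (hlam i)
      nlinarith [h2, h3]
    have hnsq : ‖(p - S) - p‖ ^ 2 ≤ ‖y - p‖ ^ 2 := by
      nlinarith [sq_nonneg ‖y - (p - S)‖, hin, hexp]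
    nlinarith [norm_nonneg ((p - S) - p), norm_nonneg (y - p), hnsq]
end

section
/- Consider Algorithm 1 (ball-expansion scheme): given r₀ > 0, at each anchor x̄ solve the problems over B(x̄, r_k) and B(x̄, 2r_k) to Δ_k-accuracy, doubling r_k whenever f(x̄'_k) - f(x̄''_k) > Δ_k. If x* ∈ B(x̄, r_k) (i.e., r_k ≥ D* := ‖x̄ - x*‖), then necessarily f(x̄'_k) - f(x̄''_k) ≤ Δ_k, so no expansion occurs. Consequently r_k < 2D* for all k (assuming r₀ ≤ D*), and the total number of expansions is at most ⌈log₂(D*/r₀)⌉ + 1. -/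
theorem stmt17 {n : ℕ} (f : EuclideanSpace ℝ (Fin n) → ℝ) (hf : ConvexOn ℝ Set.univ f)
    (xbar xstar : EuclideanSpace ℝ (Fin n)) (hmin : ∀ x, f xstar ≤ f x)
    (r : ℕ → ℝ) (hr0pos : 0 < r 0) (hr0 : r 0 ≤ ‖xbar - xstar‖)
    (hstep : ∀ k, r (k+1) = 2 * r k ∨ r (k+1) = r k)
    (hexp : ∀ k, r (k+1) = 2 * r k →
      ∃ Δ > (0:ℝ), ∃ x' ∈ Metric.closedBall xbar (r k), ∃ x'' ∈ Metric.closedBall xbar (2 * r k),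
        (∀ x ∈ Metric.closedBall xbar (r k), f x' ≤ f x + Δ) ∧
        (∀ x ∈ Metric.closedBall xbar (2 * r k), f x'' ≤ f x + Δ) ∧
        f x' - f x'' > Δ) :
    (∀ (ρ Δ : ℝ), 0 < Δ → ∀ x' ∈ Metric.closedBall xbar ρ, ∀ x'' ∈ Metric.closedBall xbar (2*ρ),
      (∀ x ∈ Metric.closedBall xbar ρ, f x' ≤ f x + Δ) →
      (∀ x ∈ Metric.closedBall xbar (2*ρ), f x'' ≤ f x + Δ) →
      xstar ∈ Metric.closedBall xbar ρ → f x' - f x'' ≤ Δ) ∧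
    (∀ k, r k < 2 * ‖xbar - xstar‖) ∧
    (∀ N : ℕ, (((Finset.range N).filter (fun k => r (k+1) = 2 * r k)).card : ℤ) ≤
      ⌈Real.logb 2 (‖xbar - xstar‖ / r 0)⌉ + 1) := by
  classical
  set D := ‖xbar - xstar‖ with hD
  have hDpos : 0 < D := lt_of_lt_of_le hr0pos hr0
  have key : ∀ (ρ Δ : ℝ), 0 < Δ → ∀ x' ∈ Metric.closedBall xbar ρ,
      ∀ x'' ∈ Metric.closedBall xbar (2*ρ),
      (∀ x ∈ Metric.closedBall xbar ρ, f x' ≤ f x + Δ) →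
      (∀ x ∈ Metric.closedBall xbar (2*ρ), f x'' ≤ f x + Δ) →
      xstar ∈ Metric.closedBall xbar ρ → f x' - f x'' ≤ Δ := by
    intro ρ Δ hΔ x' hx' x'' hx'' h1 h2 hxs
    have hu := h1 xstar hxs
    have hl := hmin x''
    linarith
  have hxsmem : ∀ ρ, D ≤ ρ → xstar ∈ Metric.closedBall xbar ρ := by
    intro ρ hρ
    rw [Metric.mem_closedBall, dist_eq_norm, ← norm_sub_rev]
    exact hρ
  have hlt : ∀ k, r k < 2 * D := by
    intro k
    induction k with
    | zero => linarith
    | succ k ih =>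
      rcases hstep k with h | h
      · -- doubling step: show r k < D
        have hrk : r k < D := by
          by_contra hc
          push_neg at hc
          obtain ⟨Δ, hΔ, x', hx', x'', hx'', h1, h2, h3⟩ := hexp k h
          have := key (r k) Δ hΔ x' hx' x'' hx'' h1 h2 (hxsmem _ hc)
          linarith
        rw [h]; linarith
      · rw [h]; exact ih
  have hrpos : ∀ k, 0 < r k := by
    intro k
    induction k with
    | zero => exact hr0pos
    | succ k ih => rcases hstep k with h | h <;> rw [h] <;> linarith
  refine ⟨key, hlt, ?_⟩
  intro N
  set m := ((Finset.range N).filter (fun k => r (k+1) = 2 * r k)).card with hm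
  have hgrow : ∀ M, r 0 * 2 ^ ((Finset.range M).filter (fun k => r (k+1) = 2 * r k)).card ≤ r M := by
    intro M
    induction M with
    | zero => simp
    | succ M ih =>
      rw [Finset.range_add_one, Finset.filter_insert]
      by_cases h : r (M+1) = 2 * r M
      · rw [if_pos h, Finset.card_insert_of_notMem (by simp), pow_succ, h]
        nlinarith [hrpos M]
      · rw [if_neg h]
        rcases hstep M with h' | h'
        · exact absurd h' h
        · rw [h']; exact ih
  have h1 : r 0 * 2 ^ m ≤ r N := hgrow N
  have h2 : r N < 2 * D := hlt N
  have h3 : (2:ℝ) ^ m < 2 * (D / r 0) := by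
    rw [show 2 * (D / r 0) = 2 * D / r 0 by ring, lt_div_iff₀ hr0pos]
    nlinarith
  have hlogb : (m : ℝ) < 1 + Real.logb 2 (D / r 0) := by
    have hdr : (0:ℝ) < D / r 0 := div_pos hDpos hr0pos
    have := Real.logb_lt_logb (by norm_num : (1:ℝ) < 2) (by positivity : (0:ℝ) < 2 ^ m) h3
    rwa [Real.logb_mul (by norm_num) (ne_of_gt hdr),
      Real.logb_self_eq_one (by norm_num),
      Real.logb_pow, Real.logb_self_eq_one (by norm_num), mul_one] at this
  have hceil := Int.le_ceil (Real.logb 2 (D / r 0))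
  have : (m : ℝ) < ((⌈Real.logb 2 (D / r 0)⌉ + 1 : ℤ) : ℝ) := by push_cast; linarith
  exact_mod_cast this.le
end

section
/- Let f : ℝⁿ → ℝ be convex with global minimizer x*, x̄ ∈ ℝⁿ with ‖x* - x̄‖ > 2R, and let x₁* minimize f over B(x̄, R) and x₂* minimize f over B(x̄, 2R). Let x̂ be the point where the segment from x₁* to x* crosses the sphere of radius 2R around x̄, and write x̂ = (1 - t)x₁* + t·x* with t = ‖x̂ - x₁*‖/‖x* - x₁*‖. If f(x₁*) - f(x̂) ≤ 2ε, then f(x₁*) - f(x*) ≤ (2 + 2D*/R)·ε, where D* = ‖x̄ - x*‖. -/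
/-!
Convexity of `f` along the segment from `x₁*` to `x*` gives
`t · (f x₁* - f x*) ≤ f x₁* - f x̂ ≤ 2ε`, and `t` is bounded below by `R / (D* + R)`:
`x̂` is at distance at least `R` from `x₁*`, while `x*` is at distance at most `D* + R`.
-/

theorem ConvexOn.mul_sub_le_sub_apply_combo {E : Type*} [AddCommGroup E] [Module ℝ E]
    {s : Set E} {f : E → ℝ} (hf : ConvexOn ℝ s f) {x y : E} (hx : x ∈ s) (hy : y ∈ s)
    {t : ℝ} (ht0 : 0 ≤ t) (ht1 : t ≤ 1) :
    t * (f x - f y) ≤ f x - f ((1 - t) • x + t • y) := by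
  have := hf.2 hx hy (sub_nonneg.2 ht1) ht0 (by ring)
  simp only [smul_eq_mul] at this
  linarith

theorem le_mul_norm_sub_add_of_combo_mem_sphere {E : Type*} [NormedAddCommGroup E]
    [NormedSpace ℝ E] {c x y : E} {R t : ℝ} (ht : 0 ≤ t) (hx : ‖x - c‖ ≤ R)
    (hz : ‖(1 - t) • x + t • y - c‖ = 2 * R) :
    R ≤ t * (‖c - y‖ + R) := by
  have hzx : (1 - t) • x + t • y - x = t • (y - x) := by
    rw [smul_sub, sub_smul, one_smul]; abel
  have hfar : R ≤ t * ‖y - x‖ := by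
    have := norm_sub_norm_le ((1 - t) • x + t • y - c) (x - c)
    rw [sub_sub_sub_cancel_right, hzx, norm_smul, Real.norm_of_nonneg ht, hz] at this
    linarith
  have hnear : ‖y - x‖ ≤ ‖c - y‖ + R := by
    have := norm_sub_le_norm_sub_add_norm_sub y c x
    rw [norm_sub_rev y c, norm_sub_rev c x] at this
    linarith
  exact hfar.trans (mul_le_mul_of_nonneg_left hnear ht)

theorem stmt18_general {n : ℕ} (f : EuclideanSpace ℝ (Fin n) → ℝ) (hf : ConvexOn ℝ Set.univ f)
    (xbar xstar x1 xhat : EuclideanSpace ℝ (Fin n)) (R ε t : ℝ)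
    (hR : 0 < R)
    (hmin : ∀ x, f xstar ≤ f x)
    (hx1 : x1 ∈ Metric.closedBall xbar R)
    (ht : t = ‖xhat - x1‖ / ‖xstar - x1‖) (ht1 : t ≤ 1)
    (hxhat : xhat = (1 - t) • x1 + t • xstar)
    (hsphere : ‖xhat - xbar‖ = 2 * R)
    (hgap : f x1 - f xhat ≤ 2 * ε) :
    f x1 - f xstar ≤ (2 + 2 * ‖xbar - xstar‖ / R) * ε := by
  set D := ‖xbar - xstar‖
  have ht0 : 0 ≤ t := ht ▸ div_nonneg (norm_nonneg _) (norm_nonneg _)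
  subst hxhat
  have hdescent : t * (f x1 - f xstar) ≤ 2 * ε :=
    (hf.mul_sub_le_sub_apply_combo trivial trivial ht0 ht1).trans hgap
  have htR : R ≤ t * (D + R) :=
    le_mul_norm_sub_add_of_combo_mem_sphere ht0 (mem_closedBall_iff_norm.1 hx1) hsphere
  rw [show (2 + 2 * D / R) * ε = (D + R) * (2 * ε) / R by field_simp; ring, le_div_iff₀ hR]
  calc (f x1 - f xstar) * R ≤ (f x1 - f xstar) * (t * (D + R)) :=
        mul_le_mul_of_nonneg_left htR (sub_nonneg.2 (hmin x1))
    _ = (D + R) * (t * (f x1 - f xstar)) := by ring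
    _ ≤ (D + R) * (2 * ε) := mul_le_mul_of_nonneg_left hdescent (by positivity)

theorem stmt18 {n : ℕ} (f : EuclideanSpace ℝ (Fin n) → ℝ) (hf : ConvexOn ℝ Set.univ f)
    (xbar xstar x1 x2 xhat : EuclideanSpace ℝ (Fin n)) (R ε t : ℝ)
    (hR : 0 < R) (hε : 0 ≤ ε)
    (hmin : ∀ x, f xstar ≤ f x)
    (hfar : 2 * R < ‖xstar - xbar‖)
    (hx1 : x1 ∈ Metric.closedBall xbar R)
    (hx1min : ∀ x ∈ Metric.closedBall xbar R, f x1 ≤ f x)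
    (hx2 : x2 ∈ Metric.closedBall xbar (2 * R))
    (hx2min : ∀ x ∈ Metric.closedBall xbar (2 * R), f x2 ≤ f x)
    (ht : t = ‖xhat - x1‖ / ‖xstar - x1‖) (ht1 : t ≤ 1)
    (hxhat : xhat = (1 - t) • x1 + t • xstar)
    (hsphere : ‖xhat - xbar‖ = 2 * R)
    (hgap : f x1 - f xhat ≤ 2 * ε) :
    f x1 - f xstar ≤ (2 + 2 * ‖xbar - xstar‖ / R) * ε :=
  stmt18_general f hf xbar xstar x1 xhat R ε t hR hmin hx1 ht ht1 hxhat hsphere hgap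
end
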